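/- Weakening of cost bounds: if M ≐ M' ∈ A with cost bound P, and the internal relation type Rel≤(P,P') is inhabited (i.e., there exist m ≤ n with P evaluating to m̄ and P' evaluating to n̄), then M ≐ M' ∈ A with cost bound P'. -/
import Mathlib


/- Cost-Aware Type Theory (Niu & Harper): the language λᶜ, its operational
   semantics, PER semantics and the type-system construction. -/

namespace CATT

/-- Syntax of the language λᶜ (de Bruijn indices; `lam` binds two variables:
index 1 is the recursion variable `f`, index 0 is the argument `a`). -/
inductive Exp : Type
  | var : ℕ → Exp
  | funtime : Exp → Exp → Exp → Exp
  | pi : Exp → Exp → Exp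
  | lam : Exp → Exp
  | app : Exp → Exp → Exp
  | nat : Exp
  | zero : Exp
  | suc : Exp → Exp
  | ifz : Exp → Exp → Exp → Exp
  | sigma : Exp → Exp → Exp
  | pair : Exp → Exp → Exp
  | fst : Exp → Exp
  | snd : Exp → Exp
  | eqty : Exp → Exp → Exp → Exp
  | triv : Exp
  | subset : Exp → Exp → Exp
  | letc : Exp → Exp → Exp
  | univ : ℕ → Exp
  | rel2 : (ℕ → ℕ → Prop) → Exp → Exp → Exp
  | rel3 : (ℕ → ℕ → ℕ → Prop) → Exp → Exp → Exp → Exp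
  | cff1 : (ℕ → ℕ) → Exp → Exp
  | cff2 : (ℕ → ℕ → ℕ) → Exp → Exp → Exp

open Exp

/-- Substitution of a closed term `v` for variable `k`
(variables above `k` are decremented). -/
def subst : Exp → ℕ → Exp → Exp
  | var n, k, v => if n = k then v else if k < n then var (n-1) else var n
  | funtime A B P, k, v => funtime (subst A k v) (subst B (k+1) v) (subst P (k+1) v)
  | pi A B, k, v => pi (subst A k v) (subst B (k+1) v)
  | lam N, k, v => lam (subst N (k+2) v)
  | app M N, k, v => app (subst M k v) (subst N k v)
  | nat, _, _ => nat
  | zero, _, _ => zero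
  | suc M, k, v => suc (subst M k v)
  | ifz M M0 M1, k, v => ifz (subst M k v) (subst M0 k v) (subst M1 (k+1) v)
  | sigma A B, k, v => sigma (subst A k v) (subst B (k+1) v)
  | pair M N, k, v => pair (subst M k v) (subst N k v)
  | fst M, k, v => fst (subst M k v)
  | snd M, k, v => snd (subst M k v)
  | eqty A M N, k, v => eqty (subst A k v) (subst M k v) (subst N k v)
  | triv, _, _ => triv
  | subset A B, k, v => subset (subst A k v) (subst B (k+1) v)
  | letc M N, k, v => letc (subst M k v) (subst N (k+1) v)
  | univ i, _, _ => univ i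
  | rel2 r M N, k, v => rel2 r (subst M k v) (subst N k v)
  | rel3 r M N O, k, v => rel3 r (subst M k v) (subst N k v) (subst O k v)
  | cff1 f M, k, v => cff1 f (subst M k v)
  | cff2 f M N, k, v => cff2 f (subst M k v) (subst N k v)

/-- The values of λᶜ. -/
inductive IsVal : Exp → Prop
  | funtime : ∀ A B P, IsVal (funtime A B P)
  | pi : ∀ A B, IsVal (pi A B)
  | lam : ∀ N, IsVal (lam N)
  | nat : IsVal nat
  | zero : IsVal zero
  | suc : ∀ {V}, IsVal V → IsVal (suc V)
  | sigma : ∀ A B, IsVal (sigma A B)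
  | pair : ∀ {V U}, IsVal V → IsVal U → IsVal (pair V U)
  | eqty : ∀ A M N, IsVal (eqty A M N)
  | triv : IsVal triv
  | subset : ∀ A B, IsVal (subset A B)
  | univ : ∀ i, IsVal (univ i)
  | rel2 : ∀ r M N, IsVal (rel2 r M N)
  | rel3 : ∀ r M N O, IsVal (rel3 r M N O)

/-- Numerals `n̄ = sucⁿ zero`. -/
def num : ℕ → Exp
  | 0 => zero
  | n+1 => suc (num n)

/-- Call-by-value small-step structural operational semantics of λᶜ. -/
inductive Step : Exp → Exp → Prop
  | app1 {E1 E1' E2} : Step E1 E1' → Step (app E1 E2) (app E1' E2)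
  | app2 {E1 E2 E2'} : IsVal E1 → Step E2 E2' → Step (app E1 E2) (app E1 E2')
  | beta {N V} : IsVal V → Step (app (lam N) V) (subst (subst N 1 (lam N)) 0 V)
  | sucCong {E E'} : Step E E' → Step (suc E) (suc E')
  | ifzCong {E E' E0 E1} : Step E E' → Step (ifz E E0 E1) (ifz E' E0 E1)
  | ifzZero {E0 E1} : Step (ifz zero E0 E1) E0
  | ifzSuc {V E0 E1} : IsVal (suc V) → Step (ifz (suc V) E0 E1) (subst E1 0 V)
  | pair1 {E1 E1' E2} : Step E1 E1' → Step (pair E1 E2) (pair E1' E2)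
  | pair2 {E1 E2 E2'} : IsVal E1 → Step E2 E2' → Step (pair E1 E2) (pair E1 E2')
  | fstCong {E E'} : Step E E' → Step (fst E) (fst E')
  | sndCong {E E'} : Step E E' → Step (snd E) (snd E')
  | fstBeta {V U} : IsVal V → IsVal U → Step (fst (pair V U)) V
  | sndBeta {V U} : IsVal V → IsVal U → Step (snd (pair V U)) U
  | letc1 {E1 E1' E2} : Step E1 E1' → Step (letc E1 E2) (letc E1' E2)
  | letcBeta {V E2} : IsVal V → Step (letc V E2) (subst E2 0 V)
  | cff1Arg {f E E'} : Step E E' → Step (cff1 f E) (cff1 f E')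
  | cff1Beta {f m} : Step (cff1 f (num m)) (num (f m))
  | cff2Arg1 {f E1 E1' E2} : Step E1 E1' → Step (cff2 f E1 E2) (cff2 f E1' E2)
  | cff2Arg2 {f E1 E2 E2'} : IsVal E1 → Step E2 E2' → Step (cff2 f E1 E2) (cff2 f E1 E2')
  | cff2Beta {f m n} : Step (cff2 f (num m) (num n)) (num (f m n))

/-- `StepN c M N`: `M` transitions to `N` in exactly `c` steps. -/
inductive StepN : ℕ → Exp → Exp → Prop
  | refl (e) : StepN 0 e e
  | tail {c e e' e''} : Step e e' → StepN c e' e'' → StepN (c+1) e e''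

/-- `M ⇓ᶜ V` : `M` evaluates to the value `V` in exactly `c` steps. -/
def EvalC (M : Exp) (c : ℕ) (V : Exp) : Prop := StepN c M V ∧ IsVal V

/-- `M ⇓ V`. -/
def Eval (M V : Exp) : Prop := ∃ c, EvalC M c V

abbrev Rel := Exp → Exp → Prop

/-- Possible type systems: relations on Val × Val × P(Val × Val). -/
abbrev PTS := Set (Exp × Exp × Rel)

/-- Least fixed point (Knaster–Tarski) of an operator on sets. -/
def myLfp {β : Type _} (f : Set β → Set β) : Set β := sInf {s | f s ⊆ s}

/-- ω = μα. {(zero,zero)} ∪ {(suc v, suc v') | α(v,v')}. -/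
def omegaSet : Set (Exp × Exp) :=
  myLfp (fun α => {p | p = (zero, zero) ∨ ∃ u u', (u, u') ∈ α ∧ p = (suc u, suc u')})

def omegaRel : Rel := fun v v' => (v, v') ∈ omegaSet

/-- `A ~ A' ↓ α ∈ τ`. -/
def sameType (A A' : Exp) (α : Rel) (τ : PTS) : Prop :=
  ∃ A0 A0', Eval A A0 ∧ Eval A' A0' ∧ (A0, A0', α) ∈ τ

/-- `M ≐ M' ∈ α` (lifting along evaluation). -/
def sameComp (M M' : Exp) (α : Rel) : Prop :=
  ∃ V V', Eval M V ∧ Eval M' V' ∧ α V V'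

/-- `a : α ▷ B ~ B' ↓ β ∈ τ`. -/
def sameTypeFam (α : Rel) (B B' : Exp) (β : Exp → Exp → Rel) (τ : PTS) : Prop :=
  ∀ V V', α V V' → sameType (subst B 0 V) (subst B' 0 V') (β V V') τ

/-- `a : α ⊨ N ≐ N' ∈ β`. -/
def sameCompOpen (α : Rel) (N N' : Exp) (β : Exp → Exp → Rel) : Prop :=
  ∀ V V', α V V' → sameComp (subst N 0 V) (subst N' 0 V') (β V V')

/-- `M ≐ M' ∈ α [P]` : cost-aware membership. -/
def sameCComp (M M' : Exp) (α : Rel) (P : Exp) : Prop :=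
  sameComp P P omegaRel ∧
  ∃ c c' V V' p, EvalC M c V ∧ EvalC M' c' V' ∧ α V V' ∧ Eval P (num p) ∧ max c c' ≤ p

/-- `a : α ⊨ N ≐ N' ∈ β [P]`. -/
def sameCCompOpen (α : Rel) (N N' : Exp) (β : Exp → Exp → Rel) (P : Exp) : Prop :=
  sameCompOpen α P P (fun _ _ => omegaRel) ∧
  ∀ V V', α V V' → sameCComp (subst N 0 V) (subst N' 0 V') (β V V') (subst P 0 V)

/-! The clauses of the `Types` operator. -/

def NatCl : PTS := {x | x.1 = nat ∧ x.2.1 = nat ∧ x.2.2 = omegaRel}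

def PiCl (τ : PTS) : PTS :=
  {x | ∃ A A' B B' α β, x.1 = pi A B ∧ x.2.1 = pi A' B' ∧
    sameType A A' α τ ∧ sameTypeFam α B B' β τ ∧
    x.2.2 = fun F F' => ∃ N N', F = lam N ∧ F' = lam N' ∧
      sameCompOpen α (subst N 1 (lam N)) (subst N' 1 (lam N')) β}

def FuntimeCl (τ : PTS) : PTS :=
  {x | ∃ A A' B B' P P' α β, x.1 = funtime A B P ∧ x.2.1 = funtime A' B' P' ∧
    sameType A A' α τ ∧ sameTypeFam α B B' β τ ∧
    sameCompOpen α P P' (fun _ _ => omegaRel) ∧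
    x.2.2 = fun F F' => ∃ N N', F = lam N ∧ F' = lam N' ∧
      sameCCompOpen α (subst N 1 (lam N)) (subst N' 1 (lam N')) β P}

def SigmaCl (τ : PTS) : PTS :=
  {x | ∃ A A' B B' α β, x.1 = sigma A B ∧ x.2.1 = sigma A' B' ∧
    sameType A A' α τ ∧ sameTypeFam α B B' β τ ∧
    x.2.2 = fun p p' => ∃ U V U' V', p = pair U V ∧ p' = pair U' V' ∧
      α U U' ∧ β U U' V V'}

def EqCl (τ : PTS) : PTS :=
  {x | ∃ A A' M M' N N' α, x.1 = eqty A M N ∧ x.2.1 = eqty A' M' N' ∧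
    sameType A A' α τ ∧ sameComp M M' α ∧ sameComp N N' α ∧
    x.2.2 = fun t t' => t = triv ∧ t' = triv ∧ sameComp M N α}

def SubsetCl (τ : PTS) : PTS :=
  {x | ∃ A A' B B' α β, x.1 = subset A B ∧ x.2.1 = subset A' B' ∧
    sameType A A' α τ ∧ sameTypeFam α B B' β τ ∧
    x.2.2 = fun V V' => α V V' ∧ ∃ U U', β V V' U U'}

def Rel2Cl : PTS :=
  {x | ∃ r M M' N N', x.1 = rel2 r M N ∧ x.2.1 = rel2 r M' N' ∧
    sameComp M M' omegaRel ∧ sameComp N N' omegaRel ∧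
    x.2.2 = fun t t' => t = triv ∧ t' = triv ∧
      ∃ m n, r m n ∧ sameComp M (num m) omegaRel ∧ sameComp N (num n) omegaRel}

def Rel3Cl : PTS :=
  {x | ∃ r M M' N N' O O', x.1 = rel3 r M N O ∧ x.2.1 = rel3 r M' N' O' ∧
    sameComp M M' omegaRel ∧ sameComp N N' omegaRel ∧ sameComp O O' omegaRel ∧
    x.2.2 = fun t t' => t = triv ∧ t' = triv ∧
      ∃ m n o, r m n o ∧ sameComp M (num m) omegaRel ∧
        sameComp N (num n) omegaRel ∧ sameComp O (num o) omegaRel}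

/-- The monotone operator `Types(v, τ)` closing `τ` under the type constructors
    and adding the universes of `v`. -/
def TypesOp (v τ : PTS) : PTS :=
  NatCl ∪ PiCl τ ∪ FuntimeCl τ ∪ SigmaCl τ ∪ EqCl τ ∪ SubsetCl τ ∪
    Rel2Cl ∪ Rel3Cl ∪ v

/-- A possible type system is a type system when it satisfies unicity,
    PER valuation, symmetry and transitivity. -/
def IsTypeSystem (τ : PTS) : Prop :=
  (∀ A B φ φ', (A, B, φ) ∈ τ → (A, B, φ') ∈ τ → φ = φ') ∧
  (∀ A B φ, (A, B, φ) ∈ τ → Symmetric φ ∧ Transitive φ) ∧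
  (∀ A B φ, (A, B, φ) ∈ τ → (B, A, φ) ∈ τ) ∧
  (∀ A B C φ, (A, B, φ) ∈ τ → (B, C, φ) ∈ τ → (A, C, φ) ∈ τ)

/-- The hierarchy `τₙ = μτ. Types(vₙ, τ)`, by strong recursion on `n`. -/
def tau : ℕ → PTS := fun n =>
  Nat.strongRecOn n (fun n ih =>
    myLfp (TypesOp {x | ∃ i, ∃ h : i < n,
      x = (univ i, univ i, fun A B => ∃ α, (A, B, α) ∈ ih i h)}))

/-- `vₙ`: the universes below level `n`. -/
def vN (n : ℕ) : PTS :=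
  {x | ∃ i, i < n ∧ x = (univ i, univ i, fun A B => ∃ α, (A, B, α) ∈ tau i)}

/-- `τₙ = μτ. Types(vₙ, τ)`. -/
def tauN (n : ℕ) : PTS := myLfp (TypesOp (vN n))

/-- `v_ω`: all universes. -/
def vOmega : PTS :=
  {x | ∃ i, x = (univ i, univ i, fun A B => ∃ α, (A, B, α) ∈ tau i)}

/-- `τ_ω = μτ. Types(v_ω, τ)`. -/
def tauOmega : PTS := myLfp (TypesOp vOmega)

end CATT

namespace CATT

open Exp in
lemma cff1_inv : ∀ {f e e2}, Step (cff1 f e) e2 →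
    (∃ e', Step e e' ∧ e2 = cff1 f e') ∨ ∃ m, e = num m ∧ e2 = num (f m) := by
  intro f e e2 h
  cases h with
  | cff1Arg h => exact Or.inl ⟨_, h, rfl⟩
  | cff1Beta => exact Or.inr ⟨_, rfl, rfl⟩

open Exp in
lemma cff2_inv : ∀ {f e1 e2 e3}, Step (cff2 f e1 e2) e3 →
    (∃ e', Step e1 e' ∧ e3 = cff2 f e' e2) ∨
    (IsVal e1 ∧ ∃ e', Step e2 e' ∧ e3 = cff2 f e1 e') ∨
    ∃ m n, e1 = num m ∧ e2 = num n ∧ e3 = num (f m n) := by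
  intro f e1 e2 e3 h
  cases h with
  | cff2Arg1 h => exact Or.inl ⟨_, h, rfl⟩
  | cff2Arg2 hv h => exact Or.inr (Or.inl ⟨hv, _, h, rfl⟩)
  | cff2Beta => exact Or.inr (Or.inr ⟨_, _, rfl, rfl, rfl⟩)

lemma num_isVal : ∀ n, IsVal (num n)
  | 0 => IsVal.zero
  | n+1 => IsVal.suc (num_isVal n)

lemma num_inj : ∀ {m n : ℕ}, num m = num n → m = n
  | 0, 0, _ => rfl
  | m+1, n+1, h => by
      have : num m = num n := by injection h
      exact congrArg Nat.succ (num_inj this)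

lemma val_not_step : ∀ {V e}, IsVal V → ¬ Step V e := by
  intro V e hV
  induction hV generalizing e with
  | suc _ ih => intro h; cases h with | sucCong h => exact ih h
  | pair h1 h2 ih1 ih2 =>
      intro h; cases h with
      | pair1 h => exact ih1 h
      | pair2 _ h => exact ih2 h
  | _ => intro h; cases h

lemma step_det : ∀ {e e1 e2}, Step e e1 → Step e e2 → e1 = e2 := by
  intro e e1 e2 h1
  induction h1 generalizing e2 with
  | app1 h ih =>
      intro h2; cases h2 with
      | app1 h' => rw [ih h']
      | app2 hv _ => exact absurd h (val_not_step hv)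
      | beta hv => exact absurd h (val_not_step (IsVal.lam _))
  | app2 hv h ih =>
      intro h2; cases h2 with
      | app1 h' => exact absurd h' (val_not_step hv)
      | app2 _ h' => rw [ih h']
      | beta hv' => exact absurd h (val_not_step hv')
  | beta hv =>
      intro h2; cases h2 with
      | app1 h' => exact absurd h' (val_not_step (IsVal.lam _))
      | app2 _ h' => exact absurd h' (val_not_step hv)
      | beta => rfl
  | sucCong h ih =>
      intro h2; cases h2 with | sucCong h' => rw [ih h']
  | ifzCong h ih =>
      intro h2; cases h2 with
      | ifzCong h' => rw [ih h']
      | ifzZero => exact absurd h (val_not_step IsVal.zero)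
      | ifzSuc hv => exact absurd h (val_not_step hv)
  | ifzZero =>
      intro h2; cases h2 with
      | ifzCong h' => exact absurd h' (val_not_step IsVal.zero)
      | ifzZero => rfl
  | ifzSuc hv =>
      intro h2; cases h2 with
      | ifzCong h' => exact absurd h' (val_not_step hv)
      | ifzSuc => rfl
  | pair1 h ih =>
      intro h2; cases h2 with
      | pair1 h' => rw [ih h']
      | pair2 hv _ => exact absurd h (val_not_step hv)
  | pair2 hv h ih =>
      intro h2; cases h2 with
      | pair1 h' => exact absurd h' (val_not_step hv)
      | pair2 _ h' => rw [ih h']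
  | fstCong h ih =>
      intro h2; cases h2 with
      | fstCong h' => rw [ih h']
      | fstBeta hv hu => exact absurd h (val_not_step (IsVal.pair hv hu))
  | sndCong h ih =>
      intro h2; cases h2 with
      | sndCong h' => rw [ih h']
      | sndBeta hv hu => exact absurd h (val_not_step (IsVal.pair hv hu))
  | fstBeta hv hu =>
      intro h2; cases h2 with
      | fstCong h' => exact absurd h' (val_not_step (IsVal.pair hv hu))
      | fstBeta => rfl
  | sndBeta hv hu =>
      intro h2; cases h2 with
      | sndCong h' => exact absurd h' (val_not_step (IsVal.pair hv hu))
      | sndBeta => rfl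
  | letc1 h ih =>
      intro h2; cases h2 with
      | letc1 h' => rw [ih h']
      | letcBeta hv => exact absurd h (val_not_step hv)
  | letcBeta hv =>
      intro h2; cases h2 with
      | letc1 h' => exact absurd h' (val_not_step hv)
      | letcBeta => rfl
  | cff1Arg h ih =>
      intro h2; cases h2 with
      | cff1Arg h' => rw [ih h']
      | cff1Beta => exact absurd h (val_not_step (num_isVal _))
  | cff1Beta =>
      intro h2
      rcases cff1_inv h2 with ⟨e', h', _⟩ | ⟨m', hm, he⟩
      · exact absurd h' (val_not_step (num_isVal _))
      · rw [he, num_inj hm]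
  | cff2Arg1 h ih =>
      intro h2; cases h2 with
      | cff2Arg1 h' => rw [ih h']
      | cff2Arg2 hv _ => exact absurd h (val_not_step hv)
      | cff2Beta => exact absurd h (val_not_step (num_isVal _))
  | cff2Arg2 hv h ih =>
      intro h2; cases h2 with
      | cff2Arg1 h' => exact absurd h' (val_not_step hv)
      | cff2Arg2 _ h' => rw [ih h']
      | cff2Beta => exact absurd h (val_not_step (num_isVal _))
  | cff2Beta =>
      intro h2
      rcases cff2_inv h2 with ⟨e', h', _⟩ | ⟨_, e', h', _⟩ | ⟨m', n', hm, hn, he⟩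
      · exact absurd h' (val_not_step (num_isVal _))
      · exact absurd h' (val_not_step (num_isVal _))
      · rw [he, num_inj hm, num_inj hn]

lemma eval_det : ∀ {M V V'}, Eval M V → Eval M V' → V = V' := by
  rintro M V V' ⟨c, hs, hv⟩ ⟨c', hs', hv'⟩
  induction hs generalizing c' with
  | refl e => cases hs' with
      | refl => rfl
      | tail h _ => exact absurd h (val_not_step hv)
  | tail h _ ih =>
      cases hs' with
      | refl => exact absurd h (val_not_step hv')
      | tail h' hs'' =>
          rw [← step_det h h'] at hs''
          exact ih hv _ hs''

open Exp in
lemma num_omega : ∀ n, omegaRel (num n) (num n) := by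
  have key : ∀ n (s : Set (Exp × Exp)),
      {p | p = (zero, zero) ∨ ∃ u u', (u, u') ∈ s ∧ p = (suc u, suc u')} ⊆ s →
      (num n, num n) ∈ s := by
    intro n
    induction n with
    | zero => intro s hs; exact hs (Or.inl rfl)
    | succ n ih => intro s hs; exact hs (Or.inr ⟨num n, num n, ih s hs, rfl⟩)
  intro n
  simp only [omegaRel, omegaSet, myLfp, Set.sInf_eq_sInter, Set.mem_sInter, Set.mem_setOf_eq]
  intro s hs
  exact key n s hs

/-- Weakening of cost bounds: if `M ≐ M' ∈ A [P]` and the internal relation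
type `Rel≤(P,P')` is inhabited (there exist `m ≤ n` with `P ⇓ m̄`, `P' ⇓ n̄`),
then `M ≐ M' ∈ A [P']`. -/
theorem cost_weakening (M M' A P P' : Exp) (α : Rel)
    (hA : sameType A A α tauOmega) (h : sameCComp M M' α P)
    (hle : ∃ m n : ℕ, m ≤ n ∧ Eval P (num m) ∧ Eval P' (num n)) :
    ∃ α', sameType A A α' tauOmega ∧ sameCComp M M' α' P' := by
  obtain ⟨m, n, hmn, hPm, hP'n⟩ := hle
  obtain ⟨_, c, c', V, V', p, hMc, hM'c', hVV', hPp, hcp⟩ := h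
  have hmp : m = p := num_inj (eval_det hPm hPp)
  refine ⟨α, hA, ?_, c, c', V, V', n, hMc, hM'c', hVV', hP'n, ?_⟩
  · exact ⟨num n, num n, hP'n, hP'n, num_omega n⟩
  · exact le_trans hcp (hmp ▸ hmn)


end CATT
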